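/- arXiv:2412.17003 — 6 statements merged into one kernel-verified Lean document; each statement's English description precedes it below -/
import Mathlib

section
/- Let (I, J) be a pair of distinct-element sequences of the same length s in [n], and let A₁, A₂ ⊆ [s] be sets such that (I_{A₁}, J_{A₁}) and (I_{A₂}, J_{A₂}) are both minimal equal sub-pairs of (I,J). If A₁ ≠ A₂ then A₁ ∩ A₂ = ∅. -/
/-- `(I_A, J_A)` is a minimal equal sub-pair of `(I, J)`: `I_A = J_A` as sets, while
`I_{A'} ≠ J_{A'}` as sets for every proper nonempty subset `A' ⊊ A`. -/
def MinimalEqualSubPair {n s : ℕ} (I J : Fin s → Fin n) (A : Finset (Fin s)) : Prop :=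
  A.Nonempty ∧ A.image I = A.image J ∧
    ∀ A' ⊂ A, A'.Nonempty → A'.image I ≠ A'.image J

theorem Finset.image_inter_eq_image_inter {α β : Type*} [DecidableEq α] [DecidableEq β]
    {I J : α → β} (hI : Function.Injective I) (hJ : Function.Injective J) {A B : Finset α}
    (hA : A.image I = A.image J) (hB : B.image I = B.image J) :
    (A ∩ B).image I = (A ∩ B).image J := by
  rw [Finset.image_inter _ _ hI, Finset.image_inter _ _ hJ, hA, hB]

theorem MinimalEqualSubPair.eq_of_subset {n s : ℕ} {I J : Fin s → Fin n} {A B : Finset (Fin s)}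
    (hA : MinimalEqualSubPair I J A) (hBA : B ⊆ A) (hB : B.Nonempty)
    (hBeq : B.image I = B.image J) : B = A := by
  by_contra hne
  exact hA.2.2 B (hBA.ssubset_of_ne hne) hB hBeq

/-- Two distinct sets inducing minimal equal sub-pairs are disjoint. -/
theorem stmt3 {n s : ℕ} (I J : Fin s → Fin n)
    (hI : Function.Injective I) (hJ : Function.Injective J)
    (A₁ A₂ : Finset (Fin s))
    (h₁ : MinimalEqualSubPair I J A₁) (h₂ : MinimalEqualSubPair I J A₂)
    (hne : A₁ ≠ A₂) :
    A₁ ∩ A₂ = ∅ := by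
  by_contra h
  have hnonempty : (A₁ ∩ A₂).Nonempty := Finset.nonempty_iff_ne_empty.2 h
  have heq : (A₁ ∩ A₂).image I = (A₁ ∩ A₂).image J :=
    Finset.image_inter_eq_image_inter hI hJ h₁.2.1 h₂.2.1
  have hA₁ := h₁.eq_of_subset Finset.inter_subset_left hnonempty heq
  have hA₂ := h₂.eq_of_subset Finset.inter_subset_right hnonempty heq
  exact hne (hA₁.symm.trans hA₂)
end

section
/- Let s ≥ 2 and let I, J ∈ [n]^s be distinct-element sequences such that the pair (I, J) is free of equalities. Then there exist distinct indices i ≠ j ∈ [s] such that I_i does not appear among the entries of J and J_j does not appear among the entries of I. -/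
/-!
Let `S` (resp. `T`) be the indices whose `I`-entry (resp. `J`-entry) is missing from `J` (resp.
`I`). Both are nonempty, since otherwise the injective images of `[s]` under `I` and `J` would be
nested sets of the same size, hence equal. If the only choice were `S = T = {k}`, then on `[s] ∖ {k}`
every `I`-entry would be a `J`-entry at an index other than `k`, and the same counting would make
the two images of `[s] ∖ {k}` equal, again contradicting freeness.
-/

open Finset

theorem Finset.image_eq_image_of_forall_exists {ι α : Type*} [DecidableEq α] {f g : ι → α}
    {A : Finset ι} (hf : Set.InjOn f A) (h : ∀ a ∈ A, ∃ b ∈ A, g b = f a) :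
    A.image f = A.image g := by
  refine eq_of_subset_of_card_le ?_ ?_
  · intro x hx
    obtain ⟨a, ha, rfl⟩ := mem_image.mp hx
    obtain ⟨b, hb, hba⟩ := h a ha
    exact mem_image.mpr ⟨b, hb, hba⟩
  · rw [card_image_of_injOn hf]
    exact card_image_le

section

variable {ι α : Type*} [Fintype ι] [DecidableEq α] {I J : ι → α}

theorem exists_forall_ne_of_image_univ_ne (hI : Function.Injective I)
    (hne : univ.image I ≠ univ.image J) : ∃ i, ∀ a, J a ≠ I i := by
  by_contra! h
  exact hne <| image_eq_image_of_forall_exists hI.injOn fun i _ ↦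
    (h i).imp fun a ha ↦ ⟨mem_univ a, ha⟩

theorem image_erase_eq_image_erase [DecidableEq ι] (hI : Function.Injective I) {k : ι}
    (hk : ∀ a, I a ≠ J k) (hmem : ∀ i ≠ k, ∃ b, J b = I i) :
    (univ.erase k).image I = (univ.erase k).image J := by
  refine image_eq_image_of_forall_exists hI.injOn fun i hi ↦ ?_
  obtain ⟨b, hb⟩ := hmem i (ne_of_mem_erase hi)
  refine ⟨b, mem_erase.mpr ⟨?_, mem_univ b⟩, hb⟩
  rintro rfl
  exact hk i hb.symm

end

/-- If `(I, J)` is a pair of distinct-element sequences of length `s ≥ 2` that is free of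
equalities, then there are distinct indices `i ≠ j` with `I_i` not among the entries of `J`
and `J_j` not among the entries of `I`. -/
theorem stmt5 {n s : ℕ} (hs : 2 ≤ s) (I J : Fin s → Fin n)
    (hI : Function.Injective I) (hJ : Function.Injective J)
    (hfree : ∀ A : Finset (Fin s), A.Nonempty → A.image I ≠ A.image J) :
    ∃ i j : Fin s, i ≠ j ∧ (∀ a : Fin s, J a ≠ I i) ∧ (∀ a : Fin s, I a ≠ J j) := by
  have huniv : (univ : Finset (Fin s)).Nonempty := univ_nonempty_iff.mpr ⟨⟨0, by omega⟩⟩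
  obtain ⟨i, hi⟩ := exists_forall_ne_of_image_univ_ne hI (hfree univ huniv)
  obtain ⟨j, hj⟩ := exists_forall_ne_of_image_univ_ne hJ (hfree univ huniv).symm
  by_contra! h
  obtain rfl : i = j := by
    by_contra hij
    obtain ⟨a, ha⟩ := h i j hij hi
    exact hj a ha
  have hmem : ∀ i' ≠ i, ∃ b, J b = I i' := fun i' hi' ↦ by
    by_contra! hmiss
    obtain ⟨a, ha⟩ := h i' i hi' hmiss
    exact hj a ha
  have herase : (univ.erase i).Nonempty := by
    rw [← card_pos, card_erase_of_mem (mem_univ i), card_univ, Fintype.card_fin]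
    omega
  exact hfree _ herase (image_erase_eq_image_erase hI hj hmem)
end

section
/- Let k ≥ 1 and let I¹, …, I^k ⊆ [n] be pairwise disjoint nonempty sets. Consider the k × k matrix A over the polynomial ring ℤ[X₁,…,X_n] whose (i, j) entry is Σ_{m ∈ I^i} X_m^{j−1} (with the convention that the first column consists of 1's, interpreting 0-th powers appropriately, i.e., entry (i,1) = 1). Then det(A) is a nonzero polynomial; moreover, its expansion as a sum of monomials contains a monomial with coefficient ±1. -/
/-!
Choose a representative `m i ∈ I i` of each block. Killing every variable other than the
`X (m i)`, and renaming `X (m i)` to `Y i`, sends each power sum `∑ x ∈ I i, X x ^ j` (`j ≠ 0`)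
to `Y i ^ j`, since by disjointness `m i` is the only representative in `I i`; so the matrix
becomes the Vandermonde matrix of `Y`. Its determinant `∏_{i<j} (Y j - Y i)` has leading
coefficient `±1` for the lexicographic order, and the coefficient of a monomial in the `Y`s
is the coefficient of the corresponding monomial in the `X`s of the original determinant.
-/

open MvPolynomial Function

variable {R : Type*} [CommRing R]

lemma MonomialOrder.isUnit_leadingCoeff_prod {σ ι : Type*} (m : MonomialOrder σ)
    {P : ι → MvPolynomial σ R} {s : Finset ι} (h : ∀ i ∈ s, IsUnit (m.leadingCoeff (P i))) :
    IsUnit (m.leadingCoeff (∏ i ∈ s, P i)) := by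
  rw [m.leadingCoeff_prod_of_regular fun i hi => (h i hi).isRegular]
  exact IsUnit.prod_iff.mpr h

lemma MonomialOrder.lex_leadingCoeff_X_sub_X [Nontrivial R] {σ : Type*} [LinearOrder σ]
    [WellFoundedGT σ] {i j : σ} (hij : i < j) :
    lex.leadingCoeff (X j - X i : MvPolynomial σ R) = -1 := by
  have hlt := lex_lt_iff.mpr (Finsupp.Lex.single_lt_iff.mpr hij)
  rw [← degree_X (R := R), ← degree_X (R := R)] at hlt
  rw [← neg_sub, leadingCoeff_neg, leadingCoeff_sub_of_lt hlt, leadingCoeff_X]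

lemma MonomialOrder.isUnit_lex_leadingCoeff_det_vandermonde_X [Nontrivial R] (k : ℕ) :
    IsUnit (lex.leadingCoeff (Matrix.vandermonde (X : Fin k → MvPolynomial (Fin k) R)).det) := by
  rw [Matrix.det_vandermonde]
  refine lex.isUnit_leadingCoeff_prod fun i _ => lex.isUnit_leadingCoeff_prod fun j hj => ?_
  rw [lex_leadingCoeff_X_sub_X (Finset.mem_Ioi.mp hj)]
  exact isUnit_one.neg

namespace MvPolynomial

variable {σ τ : Type*} {f : σ → τ}

lemma killCompl_X_apply (hf : f.Injective) (i : σ) : killCompl (R := R) hf (X (f i)) = X i := by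
  simpa using killCompl_rename_app (R := R) hf (X i)

lemma killCompl_X_of_notMem_range (hf : f.Injective) {x : τ} (hx : x ∉ Set.range f) :
    killCompl (R := R) hf (X x) = 0 := by
  rw [killCompl, aeval_X, dif_neg hx]

lemma killCompl_sum_X_pow (hf : f.Injective) {s : Finset τ} {i : σ} (hi : f i ∈ s)
    (hs : ∀ x ∈ s, x ∈ Set.range f → x = f i) {e : ℕ} (he : e ≠ 0) :
    killCompl (R := R) hf (∑ x ∈ s, X x ^ e) = X i ^ e := by
  rw [map_sum, Finset.sum_eq_single_of_mem (f i) hi, map_pow, killCompl_X_apply]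
  intro x hx hxi
  rw [map_pow, killCompl_X_of_notMem_range hf fun hr => hxi (hs x hx hr), zero_pow he]

end MvPolynomial

noncomputable def powerSumMatrix (R : Type*) [CommRing R] {σ : Type*} {k : ℕ}
    (I : Fin k → Finset σ) : Matrix (Fin k) (Fin k) (MvPolynomial σ R) :=
  Matrix.of fun i j => if (j : ℕ) = 0 then 1 else ∑ m ∈ I i, X m ^ (j : ℕ)

variable {σ : Type*} {k : ℕ} {I : Fin k → Finset σ}

lemma killCompl_mapMatrix_powerSumMatrix {m : Fin k → σ} (hm : m.Injective)
    (hmem : ∀ i, m i ∈ I i) (hdisj : Pairwise (Disjoint on I)) :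
    (killCompl (R := R) hm).mapMatrix (powerSumMatrix R I) =
      Matrix.vandermonde (X : Fin k → MvPolynomial (Fin k) R) := by
  ext i j : 1
  simp only [AlgHom.mapMatrix_apply, Matrix.map_apply, powerSumMatrix, Matrix.of_apply,
    Matrix.vandermonde_apply]
  split_ifs with hj
  · rw [map_one, hj, pow_zero]
  · refine killCompl_sum_X_pow (R := R) hm (hmem i) ?_ hj
    rintro x hx ⟨i', rfl⟩
    obtain rfl : i' = i := by_contra fun hne =>
      Finset.disjoint_left.mp (hdisj hne) (hmem i') hx
    rfl

theorem exists_isUnit_coeff_det_powerSumMatrix [Nontrivial R] (hne : ∀ i, (I i).Nonempty)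
    (hdisj : Pairwise (Disjoint on I)) : ∃ d, IsUnit ((powerSumMatrix R I).det.coeff d) := by
  choose m hmem using hne
  have hm : m.Injective := fun i j h => by_contra fun hij =>
    Finset.disjoint_left.mp (hdisj hij) (hmem i) (h ▸ hmem j)
  let V := Matrix.vandermonde (X : Fin k → MvPolynomial (Fin k) R)
  refine ⟨(MonomialOrder.lex.degree V.det).mapDomain m, ?_⟩
  rw [← coeff_killCompl hm, AlgHom.map_det, killCompl_mapMatrix_powerSumMatrix hm hmem hdisj]
  exact MonomialOrder.isUnit_lex_leadingCoeff_det_vandermonde_X k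

theorem stmt6_general (n k : ℕ) (I : Fin k → Finset (Fin n))
    (hne : ∀ i, (I i).Nonempty)
    (hdisj : ∀ i j, i ≠ j → Disjoint (I i) (I j)) :
    (Matrix.det (Matrix.of fun (i j : Fin k) =>
        if (j : ℕ) = 0 then (1 : MvPolynomial (Fin n) ℤ)
        else ∑ m ∈ I i, (X m) ^ (j : ℕ))) ≠ 0 ∧
    ∃ d : Fin n →₀ ℕ,
      (Matrix.det (Matrix.of fun (i j : Fin k) =>
        if (j : ℕ) = 0 then (1 : MvPolynomial (Fin n) ℤ)
        else ∑ m ∈ I i, (X m) ^ (j : ℕ))).coeff d = 1 ∨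
      (Matrix.det (Matrix.of fun (i j : Fin k) =>
        if (j : ℕ) = 0 then (1 : MvPolynomial (Fin n) ℤ)
        else ∑ m ∈ I i, (X m) ^ (j : ℕ))).coeff d = -1 := by
  obtain ⟨d, hd⟩ := exists_isUnit_coeff_det_powerSumMatrix (R := ℤ) hne fun i j => hdisj i j
  exact ⟨ne_zero_iff.mpr ⟨d, hd.ne_zero⟩, d, Int.isUnit_iff.mp hd⟩

/-- The matrix `A_{I¹,…,I^k}(X)` over `ℤ[X₁,…,X_n]`: entry `(i, j)` is `1` if `j = 0`
and `Σ_{m ∈ Iⁱ} X_m^j` otherwise. For pairwise disjoint nonempty sets `I¹,…,I^k`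
its determinant is nonzero, and its monomial expansion contains a monomial with
coefficient `±1`. -/
theorem stmt6 (n k : ℕ) (hk : 1 ≤ k) (I : Fin k → Finset (Fin n))
    (hne : ∀ i, (I i).Nonempty)
    (hdisj : ∀ i j, i ≠ j → Disjoint (I i) (I j)) :
    (Matrix.det (Matrix.of fun (i j : Fin k) =>
        if (j : ℕ) = 0 then (1 : MvPolynomial (Fin n) ℤ)
        else ∑ m ∈ I i, (X m) ^ (j : ℕ))) ≠ 0 ∧
    ∃ d : Fin n →₀ ℕ,
      (Matrix.det (Matrix.of fun (i j : Fin k) =>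
        if (j : ℕ) = 0 then (1 : MvPolynomial (Fin n) ℤ)
        else ∑ m ∈ I i, (X m) ^ (j : ℕ))).coeff d = 1 ∨
      (Matrix.det (Matrix.of fun (i j : Fin k) =>
        if (j : ℕ) = 0 then (1 : MvPolynomial (Fin n) ℤ)
        else ∑ m ∈ I i, (X m) ^ (j : ℕ))).coeff d = -1 :=
  stmt6_general n k I hne hdisj
end

section
/- Let α₁, …, α_n ∈ F_q be distinct and suppose the Reed–Solomon code RS_{n,k}(α₁,…,α_n) is robust against the (n−2k+1)-permutation-insdel adversary. Then for every pair of distinct-element sequences I, J ∈ [n]^{2k−1}, every vector v = (f₀, f₁, …, f_{k−1}, −g₁, …, −g_{k−1}) in the right kernel of V_{I,J}(α) satisfies f₀ = 0 and f_i = g_i for all i ∈ [k−1]. -/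
/-- The `(2k-1) × (2k-1)` matrix `V_{I,J}(α)` with `s`-th row
`(1, α_{I_s}, …, α_{I_s}^{k-1}, α_{J_s}, …, α_{J_s}^{k-1})`. -/
def Vmat {R : Type*} [CommRing R] (k n : ℕ) (x : Fin n → R)
    (I J : Fin (2 * k - 1) → Fin n) :
    Matrix (Fin (2 * k - 1)) (Fin (2 * k - 1)) R :=
  Matrix.of fun s c =>
    if (c : ℕ) = 0 then 1
    else if (c : ℕ) < k then x (I s) ^ (c : ℕ)
    else x (J s) ^ ((c : ℕ) - k + 1)

/-- The vector `(f₀, f₁, …, f_{k-1}, -g₁, …, -g_{k-1}) ∈ F^{2k-1}`. -/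
def buildVec {F : Type*} [Field F] (k : ℕ) (f g : Fin k → F) (j : Fin (2 * k - 1)) : F :=
  if h : (j : ℕ) < k then f ⟨j, h⟩
  else -g ⟨(j : ℕ) - k + 1, by have := j.isLt; omega⟩

/-- Robustness of `RS_{n,k}(α)` against the `(n-2k+1)`-permutation-insdel adversary,
via the equivalent characterization: for distinct codewords `c, c'` and distinct-element
sequences `I, J` of length `2k-1`, the tuples `c_I` and `c'_J` differ. -/
def RSRobust {F : Type*} [Field F] (n k : ℕ) (α : Fin n → F) : Prop :=
  ∀ f g : Polynomial F, f.degree < k → g.degree < k → f ≠ g →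
    ∀ I J : Fin (2 * k - 1) → Fin n, Function.Injective I → Function.Injective J →
      (fun s => f.eval (α (I s))) ≠ (fun s => g.eval (α (J s)))

/-!
Read `v = (f₀, …, f_{k-1}, -g₁, …, -g_{k-1})` as the pair of polynomials `f = ∑ fᵢ Xⁱ` and
`g = ∑_{i ≥ 1} gᵢ Xⁱ` of degree `< k`. Row `s` of `V_{I,J}(α) v` is `f(α_{I_s}) - g(α_{J_s})`, so `v`
lies in the kernel exactly when `f_I = g_J`. Robustness then forces `f = g`, i.e. `fᵢ = gᵢ`, and in
particular `f₀ = g₀ = 0`.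
-/

open Polynomial Matrix

lemma eval_degreeLTEquiv_symm {R : Type*} [CommRing R] {k : ℕ} (f : Fin k → R) (x : R) :
    ((degreeLTEquiv R k).symm f : R[X]).eval x = ∑ i, f i * x ^ (i : ℕ) := by
  rw [eval_eq_sum_degreeLTEquiv ((degreeLTEquiv R k).symm f).2, Subtype.coe_eta,
    LinearEquiv.apply_symm_apply]

section

variable {F : Type*} [Field F] {k n : ℕ} (α : Fin n → F)
  (I J : Fin (2 * k - 1) → Fin n) {f g : Fin k → F}

-- `buildVec` never reads `g 0`, so the identity needs `g 0 = 0` to match the `g`-polynomial.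
lemma Vmat_mulVec_buildVec_apply (hk : 0 < k) (hg0 : g ⟨0, hk⟩ = 0) (s : Fin (2 * k - 1)) :
    (Vmat k n α I J *ᵥ buildVec k f g) s =
      ∑ i, f i * α (I s) ^ (i : ℕ) - ∑ i, g i * α (J s) ^ (i : ℕ) := by
  obtain ⟨m, rfl⟩ : ∃ m, k = m + 1 := ⟨k - 1, by omega⟩
  rw [mulVec, dotProduct, ← (finCongr (by omega : (m + 1) + m = 2 * (m + 1) - 1)).sum_comp,
    Fin.sum_univ_add, Fin.sum_univ_succ (f := fun i => g i * _), show g 0 = 0 from hg0,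
    zero_mul, zero_add, sub_eq_add_neg, ← Finset.sum_neg_distrib]
  congr 1 <;> refine Finset.sum_congr rfl fun i _ => ?_
  · simp only [Vmat, buildVec, of_apply, finCongr_apply, Fin.val_cast, Fin.val_castAdd,
      if_pos i.isLt, dif_pos i.isLt, Fin.eta]
    split_ifs with hi
    · simp [hi]
    · exact mul_comm _ _
  · have hne : m + 1 + (i : ℕ) ≠ 0 := by omega
    have hge : ¬ m + 1 + (i : ℕ) < m + 1 := by omega
    simp only [Vmat, buildVec, of_apply, finCongr_apply, Fin.val_cast, Fin.val_natAdd,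
      if_neg hne, if_neg hge, dif_neg hge, Nat.add_sub_cancel_left, ← Fin.val_succ, Fin.eta]
    ring

lemma Vmat_mulVec_buildVec_eq_zero_iff (hk : 0 < k) (hg0 : g ⟨0, hk⟩ = 0) :
    Vmat k n α I J *ᵥ buildVec k f g = 0 ↔
      (fun s => ((degreeLTEquiv F k).symm f : F[X]).eval (α (I s))) =
        fun s => ((degreeLTEquiv F k).symm g : F[X]).eval (α (J s)) := by
  simp only [funext_iff, Pi.zero_apply, Vmat_mulVec_buildVec_apply α I J hk hg0,
    eval_degreeLTEquiv_symm, sub_eq_zero]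

end

theorem stmt9_general {F : Type*} [Field F] (n k : ℕ) (hk : 0 < k)
    (α : Fin n → F)
    (hrob : RSRobust n k α)
    (I J : Fin (2 * k - 1) → Fin n)
    (hI : Function.Injective I) (hJ : Function.Injective J)
    (f g : Fin k → F) (hg0 : g ⟨0, hk⟩ = 0)
    (hker : (Vmat k n α I J).mulVec (buildVec k f g) = 0) :
    f ⟨0, hk⟩ = 0 ∧ ∀ i : Fin k, f i = g i := by
  have hpoly : ((degreeLTEquiv F k).symm f : F[X]) = (degreeLTEquiv F k).symm g := by
    by_contra hne
    exact hrob _ _ (mem_degreeLT.1 (Subtype.prop _)) (mem_degreeLT.1 (Subtype.prop _)) hne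
      I J hI hJ ((Vmat_mulVec_buildVec_eq_zero_iff α I J hk hg0).1 hker)
  obtain rfl : f = g := (degreeLTEquiv F k).symm.injective (Subtype.ext hpoly)
  exact ⟨hg0, fun _ => rfl⟩

/-- If `RS_{n,k}(α)` is robust against the `(n-2k+1)`-permutation-insdel adversary, then
for every pair of distinct-element sequences `I, J`, every vector
`(f₀, f₁, …, f_{k-1}, -g₁, …, -g_{k-1})` in the right kernel of `V_{I,J}(α)` satisfies
`f₀ = 0` and `fᵢ = gᵢ` for all `i`. -/
theorem stmt9 {F : Type*} [Field F] (n k : ℕ) (hk : 0 < k) (hkn : 2 * k - 1 ≤ n)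
    (α : Fin n → F) (hα : Function.Injective α)
    (hrob : RSRobust n k α)
    (I J : Fin (2 * k - 1) → Fin n)
    (hI : Function.Injective I) (hJ : Function.Injective J)
    (f g : Fin k → F) (hg0 : g ⟨0, hk⟩ = 0)
    (hker : (Vmat k n α I J).mulVec (buildVec k f g) = 0) :
    f ⟨0, hk⟩ = 0 ∧ ∀ i : Fin k, f i = g i :=
  stmt9_general n k hk α hrob I J hI hJ f g hg0 hker
end

section
/- Let α₁, …, α_n ∈ F_q be distinct points such that for every pair of distinct-element sequences I, J ∈ [n]^{2k−1}, either det(V_{I,J}(α)) ≠ 0 or every vector in the right kernel of V_{I,J}(α) has the form (0, f₁, …, f_{k−1}, −f₁, …, −f_{k−1}). Then the Reed–Solomon code RS_{n,k}(α₁,…,α_n) is robust against the (n−2k+1)-permutation-insdel adversary. -/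
/-- auxiliary vector -/
def vvec {F : Type*} [Field F] (k : ℕ) (f g : Polynomial F) (j : Fin (2 * k - 1)) : F :=
  if (j : ℕ) = 0 then f.coeff 0 - g.coeff 0
  else if (j : ℕ) < k then f.coeff j
  else -(g.coeff ((j : ℕ) - k + 1))

lemma vvec_key {F : Type*} [Field F] (k n : ℕ) (hk : 0 < k) (α : Fin n → F)
    (I J : Fin (2 * k - 1) → Fin n) (f g : Polynomial F)
    (hf : f.natDegree < k) (hg : g.natDegree < k) (s : Fin (2 * k - 1)) :
    (Vmat k n α I J).mulVec (vvec k f g) s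
      = f.eval (α (I s)) - g.eval (α (J s)) := by
  obtain ⟨k', rfl⟩ : ∃ k', k = k' + 1 := ⟨k - 1, by omega⟩
  set x := α (I s) with hx
  set y := α (J s) with hy
  rw [Polynomial.eval_eq_sum_range' hf x, Polynomial.eval_eq_sum_range' hg y]
  have hlhs : (Vmat (k'+1) n α I J).mulVec (vvec (k'+1) f g) s
      = ∑ i ∈ Finset.range (2 * (k'+1) - 1),
          (if i = 0 then (1:F) else if i < k'+1 then x ^ i else y ^ (i - (k'+1) + 1)) *
          (if i = 0 then f.coeff 0 - g.coeff 0 else if i < k'+1 then f.coeff i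
            else -(g.coeff (i - (k'+1) + 1))) := by
    rw [Matrix.mulVec]
    rw [← Fin.sum_univ_eq_sum_range]
    rfl
  rw [hlhs, show (2 * (k'+1) - 1) = 2*k'+1 by omega]
  rw [Finset.range_eq_Ico, ← Finset.sum_Ico_consecutive _ (Nat.zero_le (k'+1)) (by omega : k'+1 ≤ 2*k'+1)]
  rw [Nat.Ico_zero_eq_range, Finset.sum_Ico_eq_sum_range]
  have h1 : ∑ i ∈ Finset.range (k'+1),
      (if i = 0 then (1:F) else if i < k'+1 then x ^ i else y ^ (i - (k'+1) + 1)) *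
      (if i = 0 then f.coeff 0 - g.coeff 0 else if i < k'+1 then f.coeff i
        else -(g.coeff (i - (k'+1) + 1)))
      = (∑ i ∈ Finset.range (k'+1), f.coeff i * x ^ i) - g.coeff 0 := by
    have : ∀ i ∈ Finset.range (k'+1),
        (if i = 0 then (1:F) else if i < k'+1 then x ^ i else y ^ (i - (k'+1) + 1)) *
        (if i = 0 then f.coeff 0 - g.coeff 0 else if i < k'+1 then f.coeff i
          else -(g.coeff (i - (k'+1) + 1)))
        = f.coeff i * x ^ i - (if i = 0 then g.coeff 0 else 0) := by
      intro i hi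
      rcases eq_or_ne i 0 with rfl | h0
      · simp [sub_mul]
      · have hilt : i < k'+1 := Finset.mem_range.mp hi
        simp [h0, hilt, mul_comm]
    rw [Finset.sum_congr rfl this, Finset.sum_sub_distrib, Finset.sum_ite_eq' (Finset.range (k'+1)) 0]
    simp
  have h2 : ∑ i ∈ Finset.range (2*k'+1 - (k'+1)),
      (if (k'+1) + i = 0 then (1:F) else if (k'+1) + i < k'+1 then x ^ ((k'+1)+i)
        else y ^ ((k'+1)+i - (k'+1) + 1)) *
      (if (k'+1) + i = 0 then f.coeff 0 - g.coeff 0 else if (k'+1)+i < k'+1 then f.coeff ((k'+1)+i)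
        else -(g.coeff ((k'+1)+i - (k'+1) + 1)))
      = -∑ i ∈ Finset.range k', g.coeff (i+1) * y ^ (i+1) := by
    rw [show 2*k'+1 - (k'+1) = k' by omega, ← Finset.sum_neg_distrib]
    refine Finset.sum_congr rfl fun i hi => ?_
    have e1 : ¬((k'+1) + i = 0) := by omega
    have e2 : ¬((k'+1) + i < k'+1) := by omega
    have e3 : (k'+1) + i - (k'+1) + 1 = i + 1 := by omega
    simp [e1, e2, e3, mul_comm]
  rw [h1, h2]
  rw [Finset.sum_range_succ' (fun i => g.coeff i * y ^ i) k']
  simp only [pow_zero, mul_one]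
  ring

/-- If for every pair of distinct-element sequences `I, J ∈ [n]^{2k-1}` either
`det V_{I,J}(α) ≠ 0` or every kernel vector of `V_{I,J}(α)` has the form
`(0, f₁, …, f_{k-1}, -f₁, …, -f_{k-1})`, then `RS_{n,k}(α)` is robust against the
`(n-2k+1)`-permutation-insdel adversary. -/
theorem stmt10 {F : Type*} [Field F] (n k : ℕ) (hk : 0 < k) (hkn : 2 * k - 1 ≤ n)
    (α : Fin n → F) (hα : Function.Injective α)
    (hcond : ∀ I J : Fin (2 * k - 1) → Fin n,
      Function.Injective I → Function.Injective J →
      (Vmat k n α I J).det ≠ 0 ∨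
      ∀ v : Fin (2 * k - 1) → F, (Vmat k n α I J).mulVec v = 0 →
        ∃ f : Fin k → F, f ⟨0, hk⟩ = 0 ∧ v = buildVec k f f) :
    RSRobust n k α := by
  intro f g hfdeg hgdeg hne I J hI hJ heq
  apply hne
  have hf' : f.natDegree < k := by
    rcases eq_or_ne f 0 with rfl | h
    · simpa using hk
    · exact (Polynomial.natDegree_lt_iff_degree_lt h).2 hfdeg
  have hg' : g.natDegree < k := by
    rcases eq_or_ne g 0 with rfl | h
    · simpa using hk
    · exact (Polynomial.natDegree_lt_iff_degree_lt h).2 hgdeg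
  have hmv : (Vmat k n α I J).mulVec (vvec k f g) = 0 := by
    funext s
    rw [vvec_key k n hk α I J f g hf' hg' s, Pi.zero_apply, sub_eq_zero]
    exact congrFun heq s
  have hform : ∃ h : Fin k → F, h ⟨0, hk⟩ = 0 ∧ vvec k f g = buildVec k h h := by
    rcases hcond I J hI hJ with hdet | hker
    · refine ⟨fun _ => 0, rfl, ?_⟩
      have h0 : vvec k f g = 0 := Matrix.eq_zero_of_mulVec_eq_zero hdet hmv
      rw [h0]; funext j; simp [buildVec]
    · exact hker _ hmv
  obtain ⟨h, h0, hv⟩ := hform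
  ext c
  by_cases hck : c < k
  · rcases eq_or_ne c 0 with rfl | hc0
    · have e := congrFun hv ⟨0, by omega⟩
      have e' : f.coeff 0 - g.coeff 0 = h ⟨0, hk⟩ := by
        simpa [vvec, buildVec, hk] using e
      rw [h0] at e'
      exact sub_eq_zero.mp e'
    · have e1 := congrFun hv ⟨c, by omega⟩
      have e2 := congrFun hv ⟨k - 1 + c, by omega⟩
      simp only [vvec, buildVec] at e1 e2
      rw [dif_pos (by simpa using hck)] at e1
      simp only [if_neg (by simpa using hc0), if_pos (by simpa using hck)] at e1
      rw [dif_neg (by simp; omega)] at e2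
      simp only [if_neg (by simp; omega : ¬((⟨k-1+c, by omega⟩ : Fin (2*k-1)) : ℕ) = 0),
        if_neg (by simp; omega : ¬((⟨k-1+c, by omega⟩ : Fin (2*k-1)) : ℕ) < k)] at e2
      have e3 := neg_injective e2
      have e4 : g.coeff c = h ⟨c, hck⟩ := by
        convert e3 using 2 <;> first | omega | (ext; simp; omega) | (simp; omega)
      exact e1.trans e4.symm
  · have : (k : WithBot ℕ) ≤ c := by exact_mod_cast Nat.le_of_not_lt hck
    rw [Polynomial.coeff_eq_zero_of_degree_lt (lt_of_lt_of_le hfdeg this),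
      Polynomial.coeff_eq_zero_of_degree_lt (lt_of_lt_of_le hgdeg this)]
end

section
/- Suppose the Reed–Solomon code RS_{n,k}(α₁,…,α_n) over F_q is NOT robust against the (n−2k+1)-permutation-insdel adversary. Then there exist distinct polynomials f = Σ f_i x^i and g = Σ g_i x^i of degree < k over F_q and distinct-element sequences I, J ∈ [n]^{2k−1} such that f(α_{I_s}) = g(α_{J_s}) for all s ∈ [2k−1]; consequently the nonzero vector (f₀ − g₀, f₁, …, f_{k−1}, −g₁, …, −g_{k−1}) lies in the right kernel of V_{I,J}(α) and is not of the form (0, h₁, …, h_{k−1}, −h₁, …, −h_{k−1}). -/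
/-!
Row `s` of `V_{I,J}(α)` applied to `(p₀, …, p_{k-1}, -q₁, …, -q_{k-1})` is
`p(α_{I_s}) - (q(α_{J_s}) - q₀)`; taking `p = f - g₀` and `q = g` gives
`f(α_{I_s}) - g(α_{J_s}) = 0`. The vector `w` records `f₀ - g₀` and every `fᵢ`, `gᵢ` with `i ≥ 1`,
so if it had the form `(0, h, -h)` (as `w = 0` does, with `h = 0`) all coefficients of `f` and `g`
would agree.
-/

open Polynomial Matrix

theorem Polynomial.natDegree_lt_of_degree_lt {R : Type*} [Semiring R] {p : R[X]} {k : ℕ}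
    (hk : 0 < k) (h : p.degree < k) : p.natDegree < k := by
  rcases eq_or_ne p 0 with rfl | hp
  · simpa using hk
  · exact (natDegree_lt_iff_degree_lt hp).2 h

theorem Polynomial.eq_of_degree_lt_of_coeff_eq {R : Type*} [Semiring R] {p q : R[X]} {k : ℕ}
    (hp : p.degree < k) (hq : q.degree < k) (h : ∀ i < k, p.coeff i = q.coeff i) : p = q := by
  ext i
  by_cases hi : i < k
  · exact h i hi
  · rw [coeff_eq_zero_of_degree_lt (hp.trans_le (by exact_mod_cast not_lt.1 hi)),
      coeff_eq_zero_of_degree_lt (hq.trans_le (by exact_mod_cast not_lt.1 hi))]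

section Vandermonde

variable {F : Type*} [Field F] {k : ℕ}

theorem buildVec_eq_buildVec_iff {u v u' v' : Fin k → F} :
    buildVec k u v = buildVec k u' v' ↔
      u = u' ∧ ∀ i : Fin k, (i : ℕ) ≠ 0 → v i = v' i := by
  constructor
  · intro h
    refine ⟨funext fun i => ?_, fun i hi => ?_⟩
    · simpa [buildVec] using congrFun h ⟨i, by omega⟩
    · have := congrFun h ⟨k + i - 1, by omega⟩
      simp only [buildVec, dif_neg (show ¬ k + (i : ℕ) - 1 < k by omega), neg_inj] at this
      simpa [show k + (i : ℕ) - 1 - k + 1 = i by omega] using this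
  · rintro ⟨rfl, hv⟩
    funext j
    unfold buildVec
    split_ifs with hj
    · rfl
    · rw [hv _ (by simp only [ne_eq]; omega)]

theorem buildVec_zero : buildVec k (0 : Fin k → F) 0 = 0 := by
  funext j
  simp [buildVec]

theorem Vmat_apply {R : Type*} [CommRing R] {n : ℕ} (x : Fin n → R)
    (I J : Fin (2 * k - 1) → Fin n) (s c : Fin (2 * k - 1)) :
    Vmat k n x I J s c =
      if (c : ℕ) < k then x (I s) ^ (c : ℕ) else x (J s) ^ ((c : ℕ) - k + 1) := by
  have := c.isLt
  simp only [Vmat, Matrix.of_apply]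
  split_ifs <;> simp_all

theorem Vmat_mulVec_buildVec_coeff {n : ℕ} (x : Fin n → F) (I J : Fin (2 * k - 1) → Fin n)
    {p q : F[X]} (hp : p.natDegree < k) (hq : q.natDegree < k) (s) :
    (Vmat k n x I J *ᵥ buildVec k (fun i => p.coeff i) (fun i => q.coeff i)) s =
      p.eval (x (I s)) - (q.eval (x (J s)) - q.coeff 0) := by
  set a := x (I s)
  set b := x (J s)
  let G : ℕ → F := fun j =>
    if j < k then a ^ j * p.coeff j else -(b ^ (j - k + 1) * q.coeff (j - k + 1))
  have hG : ∀ c : Fin (2 * k - 1),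
      Vmat k n x I J s c * buildVec k (fun i => p.coeff i) (fun i => q.coeff i) c = G c := by
    intro c
    simp only [Vmat_apply, buildVec, G]
    split_ifs <;> ring
  have hfirst : ∑ j ∈ Finset.range k, G j = p.eval a := by
    rw [eval_eq_sum_range' hp]
    refine Finset.sum_congr rfl fun j hj => ?_
    simp only [G, if_pos (Finset.mem_range.1 hj), mul_comm]
  have hsecond : ∑ i ∈ Finset.range (k - 1), G (k + i) = -(q.eval b - q.coeff 0) := by
    obtain ⟨m, rfl⟩ : ∃ m, k = m + 1 := ⟨k - 1, by omega⟩
    rw [eval_eq_sum_range' hq, Finset.sum_range_succ', pow_zero, mul_one, add_sub_cancel_right,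
      ← Finset.sum_neg_distrib]
    refine Finset.sum_congr (by simp) fun i _ => ?_
    simp only [G, if_neg (show ¬ m + 1 + i < m + 1 by omega),
      show m + 1 + i - (m + 1) + 1 = i + 1 by omega, mul_comm]
  rw [mulVec, dotProduct, Finset.sum_congr rfl fun c _ => hG c, Fin.sum_univ_eq_sum_range G,
    show 2 * k - 1 = k + (k - 1) by omega, Finset.sum_range_add, hfirst, hsecond]
  ring

end Vandermonde

theorem stmt11_general {F : Type*} [Field F] (n k : ℕ) (hk : 0 < k)
    (α : Fin n → F)
    (hnrob : ¬ RSRobust n k α) :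
    ∃ f g : Polynomial F, f.degree < k ∧ g.degree < k ∧ f ≠ g ∧
      ∃ I J : Fin (2 * k - 1) → Fin n,
        Function.Injective I ∧ Function.Injective J ∧
        (∀ s, f.eval (α (I s)) = g.eval (α (J s))) ∧
        ∃ w : Fin (2 * k - 1) → F,
          w = buildVec k (fun i => if (i : ℕ) = 0 then f.coeff 0 - g.coeff 0
                                    else f.coeff i)
                         (fun i => if (i : ℕ) = 0 then 0 else g.coeff i) ∧
          w ≠ 0 ∧
          (Vmat k n α I J).mulVec w = 0 ∧
          ¬ ∃ h : Fin k → F, h ⟨0, hk⟩ = 0 ∧ w = buildVec k h h := by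
  simp only [RSRobust, not_forall, not_not] at hnrob
  obtain ⟨f, g, hf, hg, hfg, I, J, hI, hJ, heval⟩ := hnrob
  set w := buildVec k (fun i => if (i : ℕ) = 0 then f.coeff 0 - g.coeff 0 else f.coeff i)
    (fun i => if (i : ℕ) = 0 then 0 else g.coeff i)
  have hspecial : ¬ ∃ h : Fin k → F, h ⟨0, hk⟩ = 0 ∧ w = buildVec k h h := by
    rintro ⟨h, h0, hwh⟩
    obtain ⟨hu, hv⟩ := buildVec_eq_buildVec_iff.1 hwh
    refine hfg (eq_of_degree_lt_of_coeff_eq hf hg fun i hi => ?_)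
    have hui := congrFun hu ⟨i, hi⟩
    rcases eq_or_ne i 0 with rfl | hi0
    · simp only at hui
      exact sub_eq_zero.1 (hui.trans h0)
    · have hvi := hv ⟨i, hi⟩ hi0
      simp only [if_neg hi0] at hui hvi
      exact hui.trans hvi.symm
  -- `buildVec` never reads `v 0`.
  have hw : w = buildVec k (fun i => (f - C (g.coeff 0)).coeff i) (fun i => g.coeff i) :=
    buildVec_eq_buildVec_iff.2
      ⟨funext fun i => by split_ifs with hi <;> simp [coeff_C, hi], fun i hi => if_neg hi⟩
  have hdeg : (f - C (g.coeff 0)).degree < k :=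
    (degree_sub_le _ _).trans_lt (max_lt hf (degree_C_le.trans_lt (by exact_mod_cast hk)))
  refine ⟨f, g, hf, hg, hfg, I, J, hI, hJ, congrFun heval, w, rfl, ?_, ?_, hspecial⟩
  · exact fun hw0 => hspecial ⟨0, rfl, hw0.trans buildVec_zero.symm⟩
  · funext s
    rw [hw, Vmat_mulVec_buildVec_coeff α I J (natDegree_lt_of_degree_lt hk hdeg)
      (natDegree_lt_of_degree_lt hk hg)]
    simp [congrFun heval s]

/-- If `RS_{n,k}(α)` is not robust against the `(n-2k+1)`-permutation-insdel adversary,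
then there are distinct polynomials `f ≠ g` of degree `< k` and distinct-element sequences
`I, J` with `f(α_{I_s}) = g(α_{J_s})` for all `s`; consequently the nonzero vector
`(f₀ - g₀, f₁, …, f_{k-1}, -g₁, …, -g_{k-1})` lies in the right kernel of `V_{I,J}(α)`
and is not of the form `(0, h₁, …, h_{k-1}, -h₁, …, -h_{k-1})`. -/
theorem stmt11 {F : Type*} [Field F] (n k : ℕ) (hk : 0 < k) (hkn : 2 * k - 1 ≤ n)
    (α : Fin n → F) (hα : Function.Injective α)
    (hnrob : ¬ RSRobust n k α) :
    ∃ f g : Polynomial F, f.degree < k ∧ g.degree < k ∧ f ≠ g ∧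
      ∃ I J : Fin (2 * k - 1) → Fin n,
        Function.Injective I ∧ Function.Injective J ∧
        (∀ s, f.eval (α (I s)) = g.eval (α (J s))) ∧
        ∃ w : Fin (2 * k - 1) → F,
          w = buildVec k (fun i => if (i : ℕ) = 0 then f.coeff 0 - g.coeff 0
                                    else f.coeff i)
                         (fun i => if (i : ℕ) = 0 then 0 else g.coeff i) ∧
          w ≠ 0 ∧
          (Vmat k n α I J).mulVec w = 0 ∧
          ¬ ∃ h : Fin k → F, h ⟨0, hk⟩ = 0 ∧ w = buildVec k h h :=
  stmt11_general n k hk α hnrob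
end
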